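/- If n ≡ 1 (mod 6) and n ≥ 7, then S(6,n) = (n^2 - 38n + 37)/(6n). -/

import Mathlib

open Finset

-- The sawtooth function ((t)).
open Classical in
noncomputable def saw (t : ℝ) : ℝ :=
  if ∃ z : ℤ, (z : ℝ) = t then 0 else t - ⌊t⌋ - 1/2

/-- The normalized Dedekind sum `S m n = 12 * s(m,n)`, with
`s(m,n) = Σ_{k=1}^{|n|} ((k/n))((mk/n))`. -/
noncomputable def S (m n : ℤ) : ℝ :=
  12 * ∑ k ∈ Finset.Icc (1 : ℤ) |n|, saw ((k : ℝ) / n) * saw ((m : ℝ) * k / n)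

lemma saw_eq (c : ℤ) (x : ℝ) (h1 : (c:ℝ) < x) (h2 : x < c+1) :
    saw x = x - c - 1/2 := by
  have hne : ¬ ∃ z : ℤ, (z:ℝ) = x := by
    rintro ⟨z, rfl⟩
    have h1' : c < z := by exact_mod_cast h1
    have h2' : z < c + 1 := by exact_mod_cast h2
    omega
  have hf : ⌊x⌋ = c := by
    rw [Int.floor_eq_iff]
    exact ⟨le_of_lt h1, h2⟩
  rw [saw, if_neg hne, hf]

lemma sum_Ioc_split (g : ℤ → ℝ) (a b c : ℤ) (hab : a ≤ b) (hbc : b ≤ c) :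
    ∑ k ∈ Ioc a c, g k = ∑ k ∈ Ioc a b, g k + ∑ k ∈ Ioc b c, g k := by
  rw [← Finset.Ioc_union_Ioc_eq_Ioc hab hbc, Finset.sum_union]
  rw [Finset.disjoint_left]
  intro x hx hx'
  simp only [Finset.mem_Ioc] at hx hx'
  omega

lemma sum_Ioc_range (g : ℤ → ℝ) (a : ℤ) (t : ℕ) :
    ∑ k ∈ Ioc a (a + t), g k = ∑ i ∈ range t, g (a + 1 + i) := by
  induction t with
  | zero => simp
  | succ t ih =>
    have h1 : a + ((t:ℕ)+1 : ℕ) = (a + t) + 1 := by push_cast; ring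
    rw [h1, sum_Ioc_split g a (a+t) (a+t+1) (by omega) (by omega), ih,
      Finset.sum_range_succ]
    congr 1
    · rw [show Finset.Ioc (a+(t:ℤ)) (a+t+1) = {a+t+1} by
        ext x; simp only [Finset.mem_Ioc, Finset.mem_singleton]; omega]
      rw [Finset.sum_singleton]
      congr 1
      push_cast; ring

lemma block_sum (n : ℝ) (hn : n ≠ 0) (a c : ℝ) (t : ℕ) :
    ∑ i ∈ range t, ((a + 1 + (i:ℝ))/n - 1/2) * (6*(a + 1 + (i:ℝ))/n - c) =
    (6*((t:ℝ)*(a+1)^2 + (a+1)*((t:ℝ)-1)*t + ((t:ℝ)-1)*t*(2*t-1)/6)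
      - n*(c+3)*((t:ℝ)*(a+1) + ((t:ℝ)-1)*t/2) + n^2*c*(t:ℝ)/2) / n^2 := by
  induction t with
  | zero => simp
  | succ t ih =>
    rw [Finset.sum_range_succ, ih]
    push_cast
    field_simp
    ring

lemma block_eval (n : ℤ) (t : ℕ) (ht : n = 6*t+1) (ht1 : 1 ≤ t)
    (j : ℤ) (hj0 : 0 ≤ j) (hj5 : j ≤ 5) :
    ∑ i ∈ range t, saw (((j*(t:ℤ) + 1 + (i:ℤ) : ℤ):ℝ)/n) * saw (((6:ℤ):ℝ) * ((j*(t:ℤ) + 1 + (i:ℤ) : ℤ):ℝ) / n)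
    = (6*((t:ℝ)*((j:ℝ)*t+1)^2 + ((j:ℝ)*t+1)*((t:ℝ)-1)*t + ((t:ℝ)-1)*t*(2*t-1)/6)
      - (n:ℝ)*(((j:ℝ)+1/2)+3)*((t:ℝ)*((j:ℝ)*t+1) + ((t:ℝ)-1)*t/2)
      + (n:ℝ)^2*((j:ℝ)+1/2)*(t:ℝ)/2) / (n:ℝ)^2 := by
  have hn0 : (0:ℤ) < n := by omega
  have hnR0 : (0:ℝ) < (n:ℝ) := by exact_mod_cast hn0
  have hnR : (n:ℝ) ≠ 0 := ne_of_gt hnR0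
  rw [← block_sum (n:ℝ) hnR ((j:ℝ)*t) ((j:ℝ)+1/2) t]
  apply Finset.sum_congr rfl
  intro i hi
  have hit : (i:ℤ) < t := by exact_mod_cast Finset.mem_range.1 hi
  have hi0 : (0:ℤ) ≤ i := Int.ofNat_nonneg i
  set k : ℤ := j*(t:ℤ) + 1 + (i:ℤ) with hk
  have hjt : 0 ≤ j * (t:ℤ) := mul_nonneg hj0 (by positivity)
  have hk0 : 0 < k := by omega
  have hkn : k < n := by
    have h5 : j * (t:ℤ) ≤ 5 * t := by
      have := mul_le_mul_of_nonneg_right hj5 (show (0:ℤ) ≤ t by positivity)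
      linarith
    omega
  have hlow : j * n < 6 * k := by
    have e1 : j * n = 6 * (j * (t:ℤ)) + j := by rw [ht]; ring
    have e2 : 6 * k = 6 * (j * (t:ℤ)) + 6 + 6 * i := by rw [hk]; ring
    have : (0:ℤ) ≤ 6 * i := by positivity
    linarith
  have hhigh : 6 * k < (j + 1) * n := by
    have e1 : (j+1) * n = 6 * (j * (t:ℤ)) + 6 * t + j + 1 := by rw [ht]; ring
    have e2 : 6 * k = 6 * (j * (t:ℤ)) + 6 + 6 * i := by rw [hk]; ring
    linarith
  have hkR0 : (0:ℝ) < (k:ℝ) := by exact_mod_cast hk0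
  have hkRn : (k:ℝ) < (n:ℝ) := by exact_mod_cast hkn
  rw [saw_eq 0 ((k:ℝ)/n) (by norm_num; positivity)
      (by norm_num; rw [div_lt_one hnR0]; exact hkRn),
    saw_eq j (((6:ℤ):ℝ) * (k:ℝ)/n) ?_ ?_]
  · simp only [hk]; push_cast; ring
  · rw [lt_div_iff₀ hnR0]
    have : ((j * n : ℤ) : ℝ) < ((6 * k : ℤ) : ℝ) := by exact_mod_cast hlow
    push_cast at this ⊢; linarith
  · rw [div_lt_iff₀ hnR0]
    have : ((6 * k : ℤ) : ℝ) < (((j+1) * n : ℤ) : ℝ) := by exact_mod_cast hhigh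
    push_cast at this ⊢; linarith

theorem stmt10 (n : ℤ) (hn : 7 ≤ n) (hmod : n % 6 = 1) :
    S 6 n = ((n : ℝ)^2 - 38*n + 37) / (6*n) := by
  obtain ⟨t, ht⟩ : ∃ t : ℕ, n = 6 * (t:ℤ) + 1 := ⟨(n / 6).toNat, by omega⟩
  have ht1 : 1 ≤ t := by omega
  have hn0 : (0:ℤ) < n := by omega
  have hnR0 : (0:ℝ) < (n:ℝ) := by exact_mod_cast hn0
  have hnR : (n:ℝ) ≠ 0 := ne_of_gt hnR0
  set g : ℤ → ℝ := fun k => saw ((k : ℝ) / n) * saw (((6:ℤ) : ℝ) * k / n) with hg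
  have hS : S 6 n = 12 * ∑ k ∈ Finset.Icc (1 : ℤ) n, g k := by
    rw [S, abs_of_pos hn0]
  have hIcc : Finset.Icc (1:ℤ) n = Finset.Ioc 0 n := by
    ext x; simp only [Finset.mem_Icc, Finset.mem_Ioc]; omega
  have hgn : g n = 0 := by
    have : ((n:ℝ))/n = 1 := div_self hnR
    simp only [hg, this]
    rw [show saw 1 = 0 by rw [saw, if_pos ⟨1, by norm_num⟩], zero_mul]
  have hsplit : ∑ k ∈ Finset.Ioc (0:ℤ) n, g k =
      ∑ k ∈ Ioc (0*(t:ℤ)) (0*(t:ℤ)+t), g k + ∑ k ∈ Ioc (1*(t:ℤ)) (1*(t:ℤ)+t), g k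
      + ∑ k ∈ Ioc (2*(t:ℤ)) (2*(t:ℤ)+t), g k + ∑ k ∈ Ioc (3*(t:ℤ)) (3*(t:ℤ)+t), g k
      + ∑ k ∈ Ioc (4*(t:ℤ)) (4*(t:ℤ)+t), g k + ∑ k ∈ Ioc (5*(t:ℤ)) (5*(t:ℤ)+t), g k
      + g n := by
    rw [sum_Ioc_split g 0 (5*(t:ℤ)+t) n (by omega) (by omega),
        sum_Ioc_split g 0 (0*(t:ℤ)+t) (5*(t:ℤ)+t) (by omega) (by omega),
        sum_Ioc_split g (0*(t:ℤ)+t) (1*(t:ℤ)+t) (5*(t:ℤ)+t) (by omega) (by omega),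
        sum_Ioc_split g (1*(t:ℤ)+t) (2*(t:ℤ)+t) (5*(t:ℤ)+t) (by omega) (by omega),
        sum_Ioc_split g (2*(t:ℤ)+t) (3*(t:ℤ)+t) (5*(t:ℤ)+t) (by omega) (by omega),
        sum_Ioc_split g (3*(t:ℤ)+t) (4*(t:ℤ)+t) (5*(t:ℤ)+t) (by omega) (by omega),
        show Finset.Ioc (5*(t:ℤ)+t) n = {n} by
          ext x; simp only [Finset.mem_Ioc, Finset.mem_singleton]; omega,
        Finset.sum_singleton,
        show Finset.Ioc (0:ℤ) (0*(t:ℤ)+t) = Ioc (0*(t:ℤ)) (0*(t:ℤ)+t) by norm_num,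
        show Finset.Ioc (0*(t:ℤ)+t) (1*(t:ℤ)+t) = Ioc (1*(t:ℤ)) (1*(t:ℤ)+t) by
          congr 1 <;> omega,
        show Finset.Ioc (1*(t:ℤ)+t) (2*(t:ℤ)+t) = Ioc (2*(t:ℤ)) (2*(t:ℤ)+t) by
          congr 1 <;> omega,
        show Finset.Ioc (2*(t:ℤ)+t) (3*(t:ℤ)+t) = Ioc (3*(t:ℤ)) (3*(t:ℤ)+t) by
          congr 1 <;> omega,
        show Finset.Ioc (3*(t:ℤ)+t) (4*(t:ℤ)+t) = Ioc (4*(t:ℤ)) (4*(t:ℤ)+t) by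
          congr 1 <;> omega,
        show Finset.Ioc (4*(t:ℤ)+t) (5*(t:ℤ)+t) = Ioc (5*(t:ℤ)) (5*(t:ℤ)+t) by
          congr 1 <;> omega]
    ring
  have hblock : ∀ j : ℤ, 0 ≤ j → j ≤ 5 →
      ∑ k ∈ Ioc (j*(t:ℤ)) (j*(t:ℤ) + t), g k
      = (6*((t:ℝ)*((j:ℝ)*t+1)^2 + ((j:ℝ)*t+1)*((t:ℝ)-1)*t + ((t:ℝ)-1)*t*(2*t-1)/6)
        - (n:ℝ)*(((j:ℝ)+1/2)+3)*((t:ℝ)*((j:ℝ)*t+1) + ((t:ℝ)-1)*t/2)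
        + (n:ℝ)^2*((j:ℝ)+1/2)*(t:ℝ)/2) / (n:ℝ)^2 := by
    intro j hj0 hj5
    rw [sum_Ioc_range g (j*t) t, ← block_eval n t ht ht1 j hj0 hj5]
  rw [hS, hIcc, hsplit, hgn,
      hblock 0 (by norm_num) (by norm_num), hblock 1 (by norm_num) (by norm_num),
      hblock 2 (by norm_num) (by norm_num), hblock 3 (by norm_num) (by norm_num),
      hblock 4 (by norm_num) (by norm_num), hblock 5 (by norm_num) (by norm_num)]
  have hnn : (n:ℝ) = 6*(t:ℝ)+1 := by exact_mod_cast congrArg (Int.cast : ℤ → ℝ) ht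
  rw [hnn]
  have htR : (0:ℝ) < 6*(t:ℝ)+1 := by positivity
  push_cast
  field_simp
  ring
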